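/- On a finite tree with length measure, the Sobolev–Ricci curvature with p = 1 coincides with the Ollivier–Ricci curvature: for distinct vertices x, y and neighborhood probability measures μ_x, μ_y, one has 1 − S_1(μ_x,μ_y)/S_1(δ_x,δ_y) = 1 − W_1(μ_x,μ_y)/d(x,y). -/

import Mathlib

open scoped BigOperators Classical
open Filter

noncomputable section

variable {V : Type*}

/-- The unique path between two vertices of a tree, as a walk. -/
def treePath (G : SimpleGraph V) (hG : G.IsTree) (x y : V) : G.Walk x y :=
  (hG.existsUnique_path x y).exists.choose

/-- Dirac probability measure at `x`, as a function. -/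
def dirac [DecidableEq V] (x : V) : V → ℝ := fun v => if v = x then 1 else 0

/-- A probability measure on a finite vertex set, as a function. -/
def IsProb [Fintype V] (mu : V → ℝ) : Prop := (∀ v, 0 ≤ mu v) ∧ ∑ v, mu v = 1

/-- Cut mass `μ(γ_e)`: total μ-mass of vertices `v` such that the edge `e` lies on the
unique path from the root `z0` to `v`. -/
def cutMass [Fintype V] (G : SimpleGraph V) (hG : G.IsTree) (z0 : V)
    (mu : V → ℝ) (e : Sym2 V) : ℝ :=
  ∑ v : V, if e ∈ (treePath G hG z0 v).edges then mu v else 0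

/-- Order-1 Sobolev transport distance on a rooted tree. -/
def S1 [Fintype V] (G : SimpleGraph V) (hG : G.IsTree) (z0 : V) (lam : Sym2 V → ℝ)
    (mu nu : V → ℝ) : ℝ :=
  ∑ e ∈ G.edgeFinset, lam e * |cutMass G hG z0 mu e - cutMass G hG z0 nu e|

/-- Order-p Sobolev transport distance on a rooted tree. -/
def Sp [Fintype V] (G : SimpleGraph V) (hG : G.IsTree) (z0 : V) (lam : Sym2 V → ℝ)
    (p : ℝ) (mu nu : V → ℝ) : ℝ :=
  (∑ e ∈ G.edgeFinset, lam e * |cutMass G hG z0 mu e - cutMass G hG z0 nu e| ^ p) ^ (1/p)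

/-- Tree path metric induced by edge lengths. -/
def treeDist (G : SimpleGraph V) (hG : G.IsTree) (lam : Sym2 V → ℝ) (x y : V) : ℝ :=
  ((treePath G hG x y).edges.map lam).sum

/-- 1-Wasserstein distance via Kantorovich–Rubinstein duality. -/
def W1 [Fintype V] (d : V → V → ℝ) (mu nu : V → ℝ) : ℝ :=
  sSup {s | ∃ f : V → ℝ, (∀ a b, |f a - f b| ≤ d a b) ∧ s = ∑ v, f v * (mu v - nu v)}

section Aux

open SimpleGraph

variable {G : SimpleGraph V}

lemma treePath_isPath (hG : G.IsTree) (x y : V) : (treePath G hG x y).IsPath :=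
  (hG.existsUnique_path x y).exists.choose_spec

lemma treePath_unique (hG : G.IsTree) {x y : V} {p : G.Walk x y} (hp : p.IsPath) :
    p = treePath G hG x y :=
  (hG.existsUnique_path x y).unique hp (treePath_isPath hG x y)

lemma treePath_self (hG : G.IsTree) (x : V) : treePath G hG x x = Walk.nil :=
  (treePath_unique hG (Walk.IsPath.nil)).symm

lemma treePath_adj (hG : G.IsTree) {x y : V} (h : G.Adj x y) :
    treePath G hG x y = Walk.cons h Walk.nil :=
  (treePath_unique hG (by simp [Walk.isPath_def, h.ne])).symm

lemma treePath_edges_nodup (hG : G.IsTree) (x y : V) : (treePath G hG x y).edges.Nodup :=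
  (treePath_isPath hG x y).isTrail.edges_nodup

lemma treePath_edges_mem_edgeSet (hG : G.IsTree) (x y : V) {e : Sym2 V}
    (he : e ∈ (treePath G hG x y).edges) : e ∈ G.edgeSet :=
  (treePath G hG x y).edges_subset_edgeSet he

/-- Reachability in the tree minus an edge is equivalent to `e` not lying on the path. -/
lemma reachable_deleteEdges_iff (hG : G.IsTree) (e : Sym2 V) (u v : V) :
    (G.deleteEdges {e}).Reachable u v ↔ e ∉ (treePath G hG u v).edges := by
  constructor
  · rintro ⟨w⟩ hmem
    have hsub : ∀ e' ∈ w.edges, e' ∈ G.edgeSet := by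
      intro e' he'
      have := w.edges_subset_edgeSet he'
      rw [SimpleGraph.edgeSet_deleteEdges] at this
      exact this.1
    have hne : ∀ e' ∈ w.edges, e' ≠ e := by
      intro e' he'
      have := w.edges_subset_edgeSet he'
      rw [SimpleGraph.edgeSet_deleteEdges] at this
      simpa using this.2
    set w' : G.Walk u v := w.transfer G hsub with hw'
    have hedges : w'.edges = w.edges := w.edges_transfer hsub
    have hbp : w'.bypass = treePath G hG u v := treePath_unique hG w'.bypass_isPath
    have : e ∈ w'.edges := by
      rw [← hbp] at hmem
      exact w'.edges_bypass_subset hmem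
    rw [hedges] at this
    exact hne e this rfl
  · intro hmem
    have hall : ∀ e' ∈ (treePath G hG u v).edges, e' ∉ ({e} : Set (Sym2 V)) := by
      intro e' he' h'
      simp only [Set.mem_singleton_iff] at h'
      exact hmem (h' ▸ he')
    exact ⟨(treePath G hG u v).toDeleteEdges {e} hall⟩

lemma not_reachable_endpoints (hG : G.IsTree) {p q : V} (h : G.Adj p q) :
    ¬ (G.deleteEdges {s(p,q)}).Reachable p q := by
  rw [reachable_deleteEdges_iff hG, treePath_adj hG h]
  simp

/-- Each vertex lies on one of the two sides determined by an edge. -/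
lemma reachable_side (hG : G.IsTree) {p q : V} (h : G.Adj p q) (v : V) :
    (G.deleteEdges {s(p,q)}).Reachable p v ∨ (G.deleteEdges {s(p,q)}).Reachable q v := by
  set e := s(p,q) with he
  by_cases hc : e ∈ (treePath G hG p v).edges
  · right
    rw [reachable_deleteEdges_iff hG]
    have hq : q ∈ (treePath G hG p v).support :=
      (treePath G hG p v).snd_mem_support_of_mem_edges hc
    set w := (treePath G hG p v).dropUntil q hq with hw
    have hwpath : w.IsPath := (treePath_isPath hG p v).dropUntil hq
    rw [← treePath_unique hG hwpath]
    intro hmem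
    -- then p ∈ w.support, contradicting nodup of full support
    have hp' : p ∈ w.support := w.fst_mem_support_of_mem_edges hmem
    have hspec := (treePath G hG p v).take_spec hq
    have hnodup : (treePath G hG p v).support.Nodup := (treePath_isPath hG p v).support_nodup
    rw [← hspec, Walk.support_append] at hnodup
    have hdisj := List.disjoint_of_nodup_append hnodup
    have hp1 : p ∈ ((treePath G hG p v).takeUntil q hq).support :=
      Walk.start_mem_support _
    have hp2 : p ∈ w.support.tail := by
      have : w.support = q :: w.support.tail := by
        rw [← Walk.support_eq_cons]
      rw [this] at hp'
      rcases List.mem_cons.mp hp' with h1 | h1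
      · exact absurd h1 h.ne
      · exact h1
    exact hdisj hp1 hp2
  · left
    rw [reachable_deleteEdges_iff hG]
    exact hc

lemma reachable_side_iff (hG : G.IsTree) {p q : V} (h : G.Adj p q) (u v : V) :
    (G.deleteEdges {s(p,q)}).Reachable u v ↔
      ((G.deleteEdges {s(p,q)}).Reachable p u ↔ (G.deleteEdges {s(p,q)}).Reachable p v) := by
  constructor
  · intro huv
    exact ⟨fun hu => hu.trans huv, fun hv => hv.trans huv.symm⟩
  · intro hiff
    rcases reachable_side hG h u with hu | hu
    · exact (hu.symm).trans (hiff.mp hu)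
    · rcases reachable_side hG h v with hv | hv
      · exact absurd ((hiff.mpr hv).trans hu.symm) (not_reachable_endpoints hG h)
      · exact hu.symm.trans hv

/-- The key combinatorial fact: an edge lies on the path from `a` to `b` iff it lies on
exactly one of the paths from the root `z0` to `a` and to `b`. -/
lemma mem_path_iff_xor (hG : G.IsTree) (z0 : V) {e : Sym2 V} (he : e ∈ G.edgeSet) (a b : V) :
    e ∈ (treePath G hG a b).edges ↔
      ¬ (e ∈ (treePath G hG z0 a).edges ↔ e ∈ (treePath G hG z0 b).edges) := by
  induction e with
  | _ p q =>
    have h : G.Adj p q := he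
    have H1 : s(p,q) ∈ (treePath G hG a b).edges ↔ ¬ (G.deleteEdges {s(p,q)}).Reachable a b := by
      rw [reachable_deleteEdges_iff hG]; exact not_not.symm
    have H2 : s(p,q) ∈ (treePath G hG z0 a).edges ↔ ¬ (G.deleteEdges {s(p,q)}).Reachable z0 a := by
      rw [reachable_deleteEdges_iff hG]; exact not_not.symm
    have H3 : s(p,q) ∈ (treePath G hG z0 b).edges ↔ ¬ (G.deleteEdges {s(p,q)}).Reachable z0 b := by
      rw [reachable_deleteEdges_iff hG]; exact not_not.symm
    rw [H1, H2, H3,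
      reachable_side_iff hG h a b, reachable_side_iff hG h z0 a, reachable_side_iff hG h z0 b]
    tauto

end Aux


noncomputable section Aux2

open SimpleGraph

variable {G : SimpleGraph V}

/-- Signed increment of `f` across an edge, oriented away from the root `z0`. -/
def Dfun (G : SimpleGraph V) (hG : G.IsTree) (z0 : V) (f : V → ℝ) : Sym2 V → ℝ :=
  Sym2.lift ⟨fun a b =>
    if s(a,b) ∈ (treePath G hG z0 b).edges ∧ s(a,b) ∉ (treePath G hG z0 a).edges then f b - f a
    else if s(a,b) ∈ (treePath G hG z0 a).edges ∧ s(a,b) ∉ (treePath G hG z0 b).edges then f a - f b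
    else 0, by
      intro a b
      have hs : s(b,a) = s(a,b) := Sym2.eq_swap
      dsimp only
      rw [hs]
      split_ifs with h1 h2 h3 h4 <;> first | rfl | (exfalso; tauto)⟩

lemma Dfun_eq (hG : G.IsTree) (z0 : V) (f : V → ℝ) {u v : V}
    (hv : s(u,v) ∈ (treePath G hG z0 v).edges)
    (hu : s(u,v) ∉ (treePath G hG z0 u).edges) :
    Dfun G hG z0 f s(u,v) = f v - f u := by
  rw [Dfun, Sym2.lift_mk]
  dsimp only
  rw [if_pos ⟨hv, hu⟩]

lemma treeDist_adj (hG : G.IsTree) (lam : Sym2 V → ℝ) {u v : V} (h : G.Adj u v) :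
    treeDist G hG lam u v = lam s(u,v) := by
  rw [treeDist, treePath_adj hG h]
  simp

lemma Dfun_bound (hG : G.IsTree) (z0 : V) (lam : Sym2 V → ℝ) (f : V → ℝ)
    (hf : ∀ a b, |f a - f b| ≤ treeDist G hG lam a b) {e : Sym2 V}
    (he : e ∈ G.edgeSet) (hlam : 0 ≤ lam e) :
    |Dfun G hG z0 f e| ≤ lam e := by
  induction e with
  | _ a b =>
    have hadj : G.Adj a b := he
    have h1 : |f b - f a| ≤ lam s(a,b) := by
      have := hf b a
      rwa [treeDist_adj hG lam hadj.symm, Sym2.eq_swap] at this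
    have h2 : |f a - f b| ≤ lam s(a,b) := by
      have := hf a b
      rwa [treeDist_adj hG lam hadj] at this
    rw [Dfun, Sym2.lift_mk]
    dsimp only
    split_ifs with hc1 hc2
    · exact h1
    · exact h2
    · simpa using hlam

/-- Telescoping: the difference of `f` along the path from the root is the sum of the
signed increments over the path's edges. -/
lemma telescope (hG : G.IsTree) (z0 : V) (f : V → ℝ) (v : V) :
    f v - f z0 = ((treePath G hG z0 v).edges.map (Dfun G hG z0 f)).sum := by
  suffices H : ∀ n (v : V), (treePath G hG z0 v).length = n →
      f v - f z0 = ((treePath G hG z0 v).edges.map (Dfun G hG z0 f)).sum from H _ v rfl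
  intro n
  induction n using Nat.strong_induction_on with
  | _ n ih =>
    intro v hlen
    cases n with
    | zero =>
      obtain rfl : z0 = v := Walk.eq_of_length_eq_zero hlen
      rw [treePath_self hG]
      simp
    | succ m =>
      rcases hq : treePath G hG z0 v with _ | ⟨hadj0, p⟩
      · rw [hq] at hlen; simp at hlen
      · obtain ⟨u, q', hadj, hconcat⟩ := Walk.exists_cons_eq_concat hadj0 p
        have hq2 : treePath G hG z0 v = q'.concat hadj := by rw [hq, hconcat]
        have hpath : (q'.concat hadj).IsPath := by rw [← hq2]; exact treePath_isPath hG z0 v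
        have hq'path : q'.IsPath := by
          rw [Walk.concat_eq_append] at hpath
          exact hpath.of_append_left
        have hq' : q' = treePath G hG z0 u := treePath_unique hG hq'path
        have hlen' : (treePath G hG z0 u).length = m := by
          rw [← hq']
          have := hq2 ▸ hlen
          rw [Walk.length_concat] at this
          omega
        have ihu := ih m (Nat.lt_succ_self m) u hlen'
        have hedges : (treePath G hG z0 v).edges = q'.edges.concat s(u,v) := by
          rw [hq2, Walk.edges_concat]
        have hnodup : (q'.edges.concat s(u,v)).Nodup := by
          rw [← hedges]; exact treePath_edges_nodup hG z0 v
        have hnotmem : s(u,v) ∉ q'.edges := by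
          rw [List.concat_eq_append, List.nodup_append] at hnodup
          intro hc
          exact hnodup.2.2 _ hc _ (List.mem_singleton_self _) rfl
        have hmem : s(u,v) ∈ (treePath G hG z0 v).edges := by
          rw [hedges, List.concat_eq_append]
          simp
        have hD : Dfun G hG z0 f s(u,v) = f v - f u :=
          Dfun_eq hG z0 f hmem (hq' ▸ hnotmem)
        rw [hconcat, Walk.edges_concat, List.concat_eq_append, List.map_append, List.sum_append]
        simp only [List.map_singleton, List.sum_singleton, hD]
        rw [hq']
        rw [← ihu]
        ring

variable [Fintype V]

/-- Convert a sum over the edges of a path into a sum over all edges with indicators. -/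
lemma list_sum_eq_finset_sum (g : Sym2 V → ℝ) {l : List (Sym2 V)} (hnd : l.Nodup)
    (hsub : ∀ e ∈ l, e ∈ G.edgeSet) :
    (l.map g).sum = ∑ e ∈ G.edgeFinset, if e ∈ l then g e else 0 := by
  classical
  have h1 : ∑ e ∈ G.edgeFinset, (if e ∈ l then g e else 0)
      = ∑ e ∈ G.edgeFinset, (if e ∈ l.toFinset then g e else 0) := by
    apply Finset.sum_congr rfl
    intro e _
    simp [List.mem_toFinset]
  rw [h1, Finset.sum_ite_mem]
  have h2 : G.edgeFinset ∩ l.toFinset = l.toFinset := by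
    apply Finset.inter_eq_right.mpr
    intro e he
    rw [List.mem_toFinset] at he
    exact SimpleGraph.mem_edgeFinset.mpr (hsub e he)
  rw [h2, List.sum_toFinset _ hnd]

lemma sum_f_eq (hG : G.IsTree) (z0 : V) (f : V → ℝ) (mu nu : V → ℝ)
    (hmu : ∑ v, mu v = 1) (hnu : ∑ v, nu v = 1) :
    ∑ v, f v * (mu v - nu v)
      = ∑ e ∈ G.edgeFinset, Dfun G hG z0 f e *
          (cutMass G hG z0 mu e - cutMass G hG z0 nu e) := by
  classical
  have key : ∑ v, f v * (mu v - nu v) = ∑ v, (f v - f z0) * (mu v - nu v) := by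
    have : ∑ v, (f v - f z0) * (mu v - nu v)
        = ∑ v, f v * (mu v - nu v) - f z0 * ∑ v, (mu v - nu v) := by
      rw [Finset.mul_sum, ← Finset.sum_sub_distrib]
      apply Finset.sum_congr rfl
      intro v _
      ring
    rw [this, Finset.sum_sub_distrib, hmu, hnu]
    ring
  rw [key]
  have step : ∀ v, (f v - f z0) * (mu v - nu v)
      = ∑ e ∈ G.edgeFinset, (if e ∈ (treePath G hG z0 v).edges then Dfun G hG z0 f e else 0)
          * (mu v - nu v) := by
    intro v
    rw [← Finset.sum_mul, ← list_sum_eq_finset_sum _ (treePath_edges_nodup hG z0 v)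
      (fun e he => treePath_edges_mem_edgeSet hG z0 v he), ← telescope hG z0 f v]
  simp_rw [step]
  rw [Finset.sum_comm]
  apply Finset.sum_congr rfl
  intro e _
  rw [cutMass, cutMass, ← Finset.sum_sub_distrib, Finset.mul_sum]
  apply Finset.sum_congr rfl
  intro v _
  split_ifs with h
  · ring
  · ring

end Aux2
section Aux3

open SimpleGraph

variable [Fintype V] {G : SimpleGraph V}

lemma cutMass_dirac [DecidableEq V] (hG : G.IsTree) (z0 x : V) (e : Sym2 V) :
    cutMass G hG z0 (dirac x) e = if e ∈ (treePath G hG z0 x).edges then 1 else 0 := by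
  rw [cutMass, Finset.sum_eq_single x]
  · simp [dirac]
  · intro v _ hv
    simp [dirac, hv]
  · simp

lemma treeDist_eq_sum (hG : G.IsTree) (lam : Sym2 V → ℝ) (x y : V) :
    treeDist G hG lam x y
      = ∑ e ∈ G.edgeFinset, if e ∈ (treePath G hG x y).edges then lam e else 0 := by
  rw [treeDist, list_sum_eq_finset_sum lam (treePath_edges_nodup hG x y)
    (fun e he => treePath_edges_mem_edgeSet hG x y he)]

lemma S1_dirac [DecidableEq V] (hG : G.IsTree) (z0 : V) (lam : Sym2 V → ℝ) (x y : V) :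
    S1 G hG z0 lam (dirac x) (dirac y) = treeDist G hG lam x y := by
  rw [S1, treeDist_eq_sum hG lam x y]
  apply Finset.sum_congr rfl
  intro e he
  rw [cutMass_dirac hG z0 x e, cutMass_dirac hG z0 y e]
  have hxor := mem_path_iff_xor hG z0 (SimpleGraph.mem_edgeFinset.mp he) x y
  by_cases hx : e ∈ (treePath G hG z0 x).edges <;>
    by_cases hy : e ∈ (treePath G hG z0 y).edges <;>
    simp [hx, hy] at hxor <;>
    simp [hx, hy, hxor] <;> norm_num

lemma W1_eq_S1 (hG : G.IsTree) (z0 : V) (lam : Sym2 V → ℝ)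
    (hlam : ∀ e ∈ G.edgeSet, 0 < lam e) (mu nu : V → ℝ)
    (hmu : ∑ v, mu v = 1) (hnu : ∑ v, nu v = 1) :
    W1 (treeDist G hG lam) mu nu = S1 G hG z0 lam mu nu := by
  classical
  set T := {s | ∃ f : V → ℝ, (∀ a b, |f a - f b| ≤ treeDist G hG lam a b)
      ∧ s = ∑ v, f v * (mu v - nu v)} with hT
  have hub : ∀ s ∈ T, s ≤ S1 G hG z0 lam mu nu := by
    rintro s ⟨f, hf, rfl⟩
    rw [sum_f_eq hG z0 f mu nu hmu hnu, S1]
    apply Finset.sum_le_sum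
    intro e he
    have heS := SimpleGraph.mem_edgeFinset.mp he
    calc Dfun G hG z0 f e * (cutMass G hG z0 mu e - cutMass G hG z0 nu e)
        ≤ |Dfun G hG z0 f e * (cutMass G hG z0 mu e - cutMass G hG z0 nu e)| := le_abs_self _
      _ = |Dfun G hG z0 f e| * |cutMass G hG z0 mu e - cutMass G hG z0 nu e| := abs_mul _ _
      _ ≤ lam e * |cutMass G hG z0 mu e - cutMass G hG z0 nu e| :=
          mul_le_mul_of_nonneg_right
            (Dfun_bound hG z0 lam f hf heS (le_of_lt (hlam e heS))) (abs_nonneg _)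
  set c : Sym2 V → ℝ := fun e =>
    if 0 ≤ cutMass G hG z0 mu e - cutMass G hG z0 nu e then lam e else -lam e with hc
  set f0 : V → ℝ := fun v =>
    ∑ e ∈ G.edgeFinset, (if e ∈ (treePath G hG z0 v).edges then c e else 0) with hf0
  have hceq : ∀ e, c e * (cutMass G hG z0 mu e - cutMass G hG z0 nu e)
      = lam e * |cutMass G hG z0 mu e - cutMass G hG z0 nu e| := by
    intro e
    rw [hc]
    dsimp only
    split_ifs with h
    · rw [abs_of_nonneg h]
    · rw [abs_of_neg (lt_of_not_ge h)]
      ring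
  have hcabs : ∀ e ∈ G.edgeFinset, |c e| = lam e := by
    intro e he
    have := hlam e (SimpleGraph.mem_edgeFinset.mp he)
    rw [hc]
    dsimp only
    split_ifs with h
    · exact abs_of_pos this
    · rw [abs_neg]
      exact abs_of_pos this
  have hlip : ∀ a b, |f0 a - f0 b| ≤ treeDist G hG lam a b := by
    intro a b
    rw [treeDist_eq_sum hG lam a b, hf0]
    dsimp only
    rw [← Finset.sum_sub_distrib]
    refine (Finset.abs_sum_le_sum_abs _ _).trans (Finset.sum_le_sum ?_)
    intro e he
    have heS := SimpleGraph.mem_edgeFinset.mp he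
    have hxor := mem_path_iff_xor hG z0 heS a b
    have hl := le_of_lt (hlam e heS)
    by_cases hea : e ∈ (treePath G hG z0 a).edges <;>
      by_cases heb : e ∈ (treePath G hG z0 b).edges <;>
      simp [hea, heb] at hxor <;>
      simp [hea, heb, hxor, hcabs e he, hl, le_refl]
  have hval : ∑ v, f0 v * (mu v - nu v) = S1 G hG z0 lam mu nu := by
    have step : ∀ v, f0 v * (mu v - nu v)
        = ∑ e ∈ G.edgeFinset,
            (if e ∈ (treePath G hG z0 v).edges then c e * (mu v - nu v) else 0) := by
      intro v
      rw [hf0]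
      dsimp only
      rw [Finset.sum_mul]
      apply Finset.sum_congr rfl
      intro e _
      split_ifs
      · rfl
      · ring
    simp_rw [step]
    rw [Finset.sum_comm, S1]
    apply Finset.sum_congr rfl
    intro e _
    rw [← hceq e, cutMass, cutMass, ← Finset.sum_sub_distrib, Finset.mul_sum]
    apply Finset.sum_congr rfl
    intro v _
    split_ifs
    · ring
    · ring
  have hmemT : S1 G hG z0 lam mu nu ∈ T := ⟨f0, hlip, hval.symm⟩
  rw [W1, ← hT]
  exact le_antisymm (csSup_le ⟨_, hmemT⟩ hub)
    (le_csSup ⟨S1 G hG z0 lam mu nu, fun s hs => hub s hs⟩ hmemT)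

end Aux3

/-- On a finite tree with the length measure, the Sobolev–Ricci curvature with `p = 1`
coincides with the Ollivier–Ricci curvature. -/
theorem src_eq_orc_on_tree [Fintype V] [DecidableEq V]
    (G : SimpleGraph V) (hG : G.IsTree) (z0 : V) (lam : Sym2 V → ℝ)
    (hlam : ∀ e ∈ G.edgeSet, 0 < lam e) (x y : V) (hxy : x ≠ y)
    (mux muy : V → ℝ) (hmux : IsProb mux) (hmuy : IsProb muy) :
    1 - S1 G hG z0 lam mux muy / S1 G hG z0 lam (dirac x) (dirac y)
      = 1 - W1 (treeDist G hG lam) mux muy / treeDist G hG lam x y := by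
  rw [S1_dirac hG z0 lam x y, W1_eq_S1 hG z0 lam hlam mux muy hmux.2 hmuy.2]


end
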